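/- For 0 < a < 1, all six extraneous fixed points of C_a are real and lie in the open interval (-1, 1); the three positive ones a₁ > a₂ > a₃ satisfy 0 < a₃ < √a < a₂ < √((a+1)/2) < a₁ < 1. -/

import Mathlib

/-!
Substituting `w = z²` turns the sextic into the cubic
`q(w) = 22w³ - 23(a+1)w² + (5a²+16a+5)w - a(a+1)`, whose values `q 0 = -a(a+1)`,
`q a = 4a(1-a)²`, `q ((a+1)/2) = -(a+1)(1-a)²/2` and `q 1 = 4(1-a)²` alternate in sign.
By the intermediate value theorem `q` has a root in each of `(0, a)`, `(a, (a+1)/2)` and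
`((a+1)/2, 1)`; these are all three roots of `q`, so the six roots of the sextic are their real
square roots and the negatives of these.
-/

open Set

theorem cubic_eq_mul_sub_mul_sub_mul_sub {R : Type*} [CommRing R] [NoZeroDivisors R]
    {c d e f r₁ r₂ r₃ : R} (h₁₂ : r₁ ≠ r₂) (h₁₃ : r₁ ≠ r₃) (h₂₃ : r₂ ≠ r₃)
    (hr₁ : c * r₁ ^ 3 + d * r₁ ^ 2 + e * r₁ + f = 0)
    (hr₂ : c * r₂ ^ 3 + d * r₂ ^ 2 + e * r₂ + f = 0)
    (hr₃ : c * r₃ ^ 3 + d * r₃ ^ 2 + e * r₃ + f = 0) (x : R) :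
    c * x ^ 3 + d * x ^ 2 + e * x + f = c * (x - r₁) * (x - r₂) * (x - r₃) := by
  -- successive divided differences of the root equations yield Vieta's formulas
  have hdiff₁₂ : c * (r₁ ^ 2 + r₁ * r₂ + r₂ ^ 2) + d * (r₁ + r₂) + e = 0 := by
    refine (mul_eq_zero.mp ?_).resolve_left (sub_ne_zero.mpr h₁₂)
    linear_combination hr₁ - hr₂
  have hdiff₁₃ : c * (r₁ ^ 2 + r₁ * r₃ + r₃ ^ 2) + d * (r₁ + r₃) + e = 0 := by
    refine (mul_eq_zero.mp ?_).resolve_left (sub_ne_zero.mpr h₁₃)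
    linear_combination hr₁ - hr₃
  have hsum : c * (r₁ + r₂ + r₃) + d = 0 := by
    refine (mul_eq_zero.mp ?_).resolve_left (sub_ne_zero.mpr h₂₃)
    linear_combination hdiff₁₂ - hdiff₁₃
  have hpairs : c * (r₁ * r₂ + r₁ * r₃ + r₂ * r₃) = e := by
    linear_combination (r₁ + r₂) * hsum - hdiff₁₂
  have hprod : c * (r₁ * r₂ * r₃) = -f := by
    linear_combination hr₁ - r₁ ^ 2 * hsum + r₁ * hpairs
  linear_combination x ^ 2 * hsum - x * hpairs + hprod

theorem Complex.sq_eq_ofReal_iff_of_nonneg {r : ℝ} (hr : 0 ≤ r) (z : ℂ) :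
    z ^ 2 = (r : ℂ) ↔ z = (√r : ℝ) ∨ z = -((√r : ℝ) : ℂ) := by
  rw [← Real.sq_sqrt hr, Complex.ofReal_pow, Real.sqrt_sq (Real.sqrt_nonneg r)]
  exact (Commute.all z _).sq_eq_sq_iff_eq_or_eq_neg

def extraneousCubic {R : Type*} [CommRing R] (a w : R) : R :=
  22 * w ^ 3 - 23 * (a + 1) * w ^ 2 + (5 * a ^ 2 + 16 * a + 5) * w - a * (a + 1)

@[norm_cast]
theorem ofReal_extraneousCubic (a w : ℝ) :
    ((extraneousCubic a w : ℝ) : ℂ) = extraneousCubic (a : ℂ) (w : ℂ) := by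
  simp [extraneousCubic]

theorem extraneousCubic_eq_mul {R : Type*} [CommRing R] [NoZeroDivisors R] {a r₁ r₂ r₃ : R}
    (h₁₂ : r₁ ≠ r₂) (h₁₃ : r₁ ≠ r₃) (h₂₃ : r₂ ≠ r₃) (hr₁ : extraneousCubic a r₁ = 0)
    (hr₂ : extraneousCubic a r₂ = 0) (hr₃ : extraneousCubic a r₃ = 0) (w : R) :
    extraneousCubic a w = 22 * (w - r₁) * (w - r₂) * (w - r₃) := by
  unfold extraneousCubic at *
  linear_combination cubic_eq_mul_sub_mul_sub_mul_sub (c := 22) (d := -(23 * (a + 1)))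
    (e := 5 * a ^ 2 + 16 * a + 5) (f := -(a * (a + 1))) h₁₂ h₁₃ h₂₃
    (by linear_combination hr₁) (by linear_combination hr₂) (by linear_combination hr₃) w

theorem exists_roots_extraneousCubic {a : ℝ} (ha0 : 0 < a) (ha1 : a < 1) :
    ∃ b₁ b₂ b₃ : ℝ, b₁ ∈ Ioo ((a + 1) / 2) 1 ∧ b₂ ∈ Ioo a ((a + 1) / 2) ∧ b₃ ∈ Ioo 0 a ∧
      extraneousCubic a b₁ = 0 ∧ extraneousCubic a b₂ = 0 ∧ extraneousCubic a b₃ = 0 := by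
  have hcont : Continuous (extraneousCubic a) := by
    unfold extraneousCubic; fun_prop
  have h1a : 0 < 1 - a := by linarith
  have hq0 : extraneousCubic a 0 < 0 := by
    have : extraneousCubic a 0 = -(a * (a + 1)) := by unfold extraneousCubic; ring
    rw [this, neg_neg_iff_pos]; positivity
  have hqa : 0 < extraneousCubic a a := by
    have : extraneousCubic a a = 4 * a * (1 - a) ^ 2 := by unfold extraneousCubic; ring
    rw [this]; positivity
  have hqm : extraneousCubic a ((a + 1) / 2) < 0 := by
    have : extraneousCubic a ((a + 1) / 2) = -((a + 1) * (1 - a) ^ 2 / 2) := by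
      unfold extraneousCubic; ring
    rw [this, neg_neg_iff_pos]; positivity
  have hq1 : 0 < extraneousCubic a 1 := by
    have : extraneousCubic a 1 = 4 * (1 - a) ^ 2 := by unfold extraneousCubic; ring
    rw [this]; positivity
  obtain ⟨b₁, hb₁, hq₁⟩ := intermediate_value_Ioo (by linarith) hcont.continuousOn
    (mem_Ioo.mpr ⟨hqm, hq1⟩)
  obtain ⟨b₂, hb₂, hq₂⟩ := intermediate_value_Ioo' (by linarith) hcont.continuousOn
    (mem_Ioo.mpr ⟨hqm, hqa⟩)
  obtain ⟨b₃, hb₃, hq₃⟩ := intermediate_value_Ioo ha0.le hcont.continuousOn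
    (mem_Ioo.mpr ⟨hq0, hqa⟩)
  exact ⟨b₁, b₂, b₃, hb₁, hb₂, hb₃, hq₁, hq₂, hq₃⟩

/-- For `0 < a < 1`, all six extraneous fixed points of `C_a` (solutions of `Q(z)=0`) are
real and lie in `(-1,1)`; the positive ones `a₁ > a₂ > a₃` satisfy
`0 < a₃ < √a < a₂ < √((a+1)/2) < a₁ < 1`. -/
theorem stmt11 (a : ℝ) (ha0 : 0 < a) (ha1 : a < 1) :
    ∃ a1 a2 a3 : ℝ,
      0 < a3 ∧ a3 < Real.sqrt a ∧ Real.sqrt a < a2 ∧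
      a2 < Real.sqrt ((a + 1) / 2) ∧ Real.sqrt ((a + 1) / 2) < a1 ∧ a1 < 1 ∧
      ∀ z : ℂ,
        (22 * z ^ 6 - 23 * ((a : ℂ) + 1) * z ^ 4
            + (5 * (a : ℂ) ^ 2 + 16 * (a : ℂ) + 5) * z ^ 2 - (a : ℂ) * ((a : ℂ) + 1) = 0
          ↔ (z = (a1 : ℂ) ∨ z = -(a1 : ℂ) ∨ z = (a2 : ℂ) ∨ z = -(a2 : ℂ)
              ∨ z = (a3 : ℂ) ∨ z = -(a3 : ℂ))) := by
  obtain ⟨b₁, b₂, b₃, ⟨hmb₁, hb₁1⟩, ⟨hab₂, hb₂m⟩, ⟨hb₃0, hb₃a⟩, hq₁, hq₂, hq₃⟩ :=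
    exists_roots_extraneousCubic ha0 ha1
  have hfactor := extraneousCubic_eq_mul (a := (a : ℂ)) (r₁ := b₁) (r₂ := b₂) (r₃ := b₃)
    (by exact_mod_cast ne_of_gt (by linarith)) (by exact_mod_cast ne_of_gt (by linarith))
    (by exact_mod_cast ne_of_gt (by linarith))
    (by exact_mod_cast hq₁) (by exact_mod_cast hq₂) (by exact_mod_cast hq₃)
  refine ⟨√b₁, √b₂, √b₃, Real.sqrt_pos.mpr hb₃0, Real.sqrt_lt_sqrt hb₃0.le hb₃a,
    Real.sqrt_lt_sqrt ha0.le hab₂, Real.sqrt_lt_sqrt (ha0.trans hab₂).le hb₂m,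
    Real.sqrt_lt_sqrt (by linarith) hmb₁, (Real.sqrt_lt' one_pos).mpr (by rwa [one_pow]),
    fun z => ?_⟩
  have hsextic : 22 * z ^ 6 - 23 * ((a : ℂ) + 1) * z ^ 4
      + (5 * (a : ℂ) ^ 2 + 16 * (a : ℂ) + 5) * z ^ 2 - (a : ℂ) * ((a : ℂ) + 1)
      = extraneousCubic (a : ℂ) (z ^ 2) := by
    unfold extraneousCubic; ring
  rw [hsextic, hfactor]
  simp only [mul_eq_zero, OfNat.ofNat_ne_zero, false_or, sub_eq_zero, or_assoc,
    Complex.sq_eq_ofReal_iff_of_nonneg (show 0 ≤ b₁ by linarith),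
    Complex.sq_eq_ofReal_iff_of_nonneg (show 0 ≤ b₂ by linarith),
    Complex.sq_eq_ofReal_iff_of_nonneg hb₃0.le]
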